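/- arXiv:2509.06706 — 3 statements merged into one kernel-verified Lean document; each statement's English description precedes it below -/
import Mathlib

section
/- Let x be a root of unity with x ≠ 1, let p ≥ 1 and n ≥ 1 be integers, and let s ∈ ℂ with |s−n| < 1. Then (−1)^{p−1}·φ^{(p−1)}(s+1/2;x)/(p−1)! = x^{−n−1} · ∑_{k=0}^∞ C(k+p−1,p−1) · (−1)^k · ( ti_{k+p}(x) − t_n(k+p;x) ) · (s−n)^k, where φ^{(p−1)} denotes the (p−1)-st derivative of φ with respect to s and C(a,b) is the binomial coefficient. -/
open Filter Finset

/-- Limit of a sequence of complex numbers (junk value if divergent). -/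
noncomputable def seqLim (f : ℕ → ℂ) : ℂ := lim (Filter.map f Filter.atTop)

/-- Finite sum `t_n(p;z) = ∑_{k=1}^n z^k/(k-1/2)^p`. -/
noncomputable def tFin (p : ℕ) (z : ℂ) (n : ℕ) : ℂ :=
  ∑ k ∈ Finset.Icc 1 n, z ^ k / ((k : ℂ) - 1/2) ^ p

/-- t-polylogarithm `ti_p(z) = ∑_{n=1}^∞ z^n/(n-1/2)^p`, as limit of partial sums. -/
noncomputable def tpoly (p : ℕ) (z : ℂ) : ℂ :=
  seqLim (fun N => ∑ n ∈ Finset.Icc 1 N, z ^ n / ((n : ℂ) - 1/2) ^ p)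

/-- `φ(s;x) = ∑_{k=0}^∞ x^k/(k+s)`, as limit of partial sums. -/
noncomputable def phi (s x : ℂ) : ℂ :=
  seqLim (fun N => ∑ k ∈ Finset.range N, x ^ k / ((k : ℂ) + s))

/-! Write `L_q(w) = ∑_{k ≥ 0} x^k / (k + w)^q` (`lerchSum x q w`; for `q = 1` it converges by
Dirichlet's test), so that `φ(·;x) = L_1`. Termwise differentiation (the differentiated series
converge uniformly on half-planes `Re w > δ`) gives `L_q' = -q L_{q+1}`, hence
`φ^{(p-1)} = (-1)^{p-1} (p-1)! L_p` on `Re w > 0`. Being holomorphic there, `L_p` is the sum of its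
Taylor series at `a = n + 1/2` on the disc of radius `n + 1/2 > 1`; its Taylor coefficients are
`C(k+p-1, p-1) (-1)^k L_{k+p}(a)`, and shifting the summation index shows
`x^{n+1} L_q(n + 1/2) = ti_q(x) - t_n(q;x)`. -/

open Topology

noncomputable def lerchSum (x : ℂ) (q : ℕ) (w : ℂ) : ℂ :=
  seqLim fun N => ∑ k ∈ range N, x ^ k / ((k : ℂ) + w) ^ q

lemma seqLim_eq_of_tendsto {f : ℕ → ℂ} {L : ℂ} (h : Tendsto f atTop (𝓝 L)) : seqLim f = L :=
  lim_eq h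

lemma CauchySeq.tendsto_seqLim {f : ℕ → ℂ} (h : CauchySeq f) :
    Tendsto f atTop (𝓝 (seqLim f)) := by
  obtain ⟨L, hL⟩ := cauchySeq_tendsto_of_complete h
  rwa [seqLim_eq_of_tendsto hL]

lemma natCast_add_re_le_norm (k : ℕ) (w : ℂ) : (k : ℝ) + w.re ≤ ‖(k : ℂ) + w‖ := by
  simpa using Complex.re_le_norm ((k : ℂ) + w)

lemma summable_inv_natCast_add_pow {δ : ℝ} (hδ : 0 < δ) {q : ℕ} (hq : 2 ≤ q) :
    Summable fun k : ℕ => (((k : ℝ) + δ) ^ q)⁻¹ := by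
  have := (Real.summable_one_div_nat_add_rpow δ q).2 (by exact_mod_cast hq)
  refine this.congr fun k => ?_
  rw [abs_of_pos (by positivity), Real.rpow_natCast, one_div]

lemma natCast_add_ne_zero {w : ℂ} (hw : 0 < w.re) (k : ℕ) : (k : ℂ) + w ≠ 0 := fun h => by
  have := (natCast_add_re_le_norm k w).trans_lt' (by positivity)
  rw [h, norm_zero] at this
  exact lt_irrefl _ this

section
variable {x : ℂ}

lemma norm_pow_div_natCast_add_pow_le (hx : ‖x‖ ≤ 1) {δ : ℝ} (hδ : 0 < δ) {w : ℂ}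
    (hw : δ ≤ w.re) (k q : ℕ) : ‖x ^ k / ((k : ℂ) + w) ^ q‖ ≤ (((k : ℝ) + δ) ^ q)⁻¹ := by
  rw [norm_div, norm_pow, norm_pow, div_eq_mul_inv]
  calc ‖x‖ ^ k * (‖(k : ℂ) + w‖ ^ q)⁻¹ ≤ 1 * (((k : ℝ) + δ) ^ q)⁻¹ := by
        gcongr
        · exact pow_le_one₀ (norm_nonneg x) hx
        · linarith [natCast_add_re_le_norm k w]
    _ = _ := one_mul _

lemma summable_lerchSum_term (hx : ‖x‖ ≤ 1) {w : ℂ} (hw : 0 < w.re) {q : ℕ} (hq : 2 ≤ q) :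
    Summable fun k : ℕ => x ^ k / ((k : ℂ) + w) ^ q :=
  (summable_inv_natCast_add_pow hw hq).of_norm_bounded
    fun k => norm_pow_div_natCast_add_pow_le hx hw le_rfl k q

lemma cauchySeq_lerchSum_one (hx : ‖x‖ ≤ 1) (hx1 : x ≠ 1) {w : ℂ} (hw : 0 < w.re) :
    CauchySeq fun N => ∑ k ∈ range N, x ^ k / ((k : ℂ) + w) := by
  have hmain : CauchySeq fun N => ∑ k ∈ range N, ((k : ℝ) + w.re)⁻¹ • x ^ k := by
    refine Antitone.cauchySeq_series_mul_of_tendsto_zero_of_bounded (b := 2 / ‖x - 1‖)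
      (fun i j hij => ?_) ?_ fun N => ?_
    · gcongr
    · exact tendsto_inv_atTop_zero.comp
        (tendsto_atTop_add_const_right _ _ tendsto_natCast_atTop_atTop)
    · rw [geom_sum_eq hx1, norm_div]
      gcongr
      calc ‖x ^ N - 1‖ ≤ ‖x ^ N‖ + ‖(1 : ℂ)‖ := norm_sub_le _ _
        _ ≤ 1 + 1 := by
          rw [norm_one, norm_pow]; gcongr; exact pow_le_one₀ (norm_nonneg x) hx
        _ = 2 := by norm_num
  -- comparing with the real weights `(k + Re w)⁻¹` leaves an absolutely convergent remainder
  have hcorr : Summable fun k : ℕ => x ^ k / ((k : ℂ) + w) - ((k : ℝ) + w.re)⁻¹ • x ^ k := by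
    refine ((summable_inv_natCast_add_pow hw le_rfl).mul_left ‖w - w.re‖).of_norm_bounded
      fun k => ?_
    have hkw := natCast_add_ne_zero hw k
    have hkr := natCast_add_ne_zero (w := w.re) hw k
    have : x ^ k / ((k : ℂ) + w) - ((k : ℝ) + w.re)⁻¹ • x ^ k
        = x ^ k * ((w.re - w) / (((k : ℂ) + w) * ((k : ℂ) + w.re))) := by
      rw [Complex.real_smul]; push_cast; field_simp; ring
    rw [this, norm_mul, norm_div, norm_mul, norm_sub_rev]
    have hre := natCast_add_re_le_norm k (w.re : ℂ)
    rw [Complex.ofReal_re] at hre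
    calc ‖x ^ k‖ * (‖w - w.re‖ / (‖(k : ℂ) + w‖ * ‖(k : ℂ) + w.re‖))
        ≤ 1 * (‖w - w.re‖ / (((k : ℝ) + w.re) * ((k : ℝ) + w.re))) := by
          gcongr
          · rw [norm_pow]; exact pow_le_one₀ (norm_nonneg x) hx
          · exact natCast_add_re_le_norm k w
      _ = ‖w - w.re‖ * (((k : ℝ) + w.re) ^ 2)⁻¹ := by ring
  convert hmain.add hcorr.hasSum.tendsto_sum_nat.cauchySeq using 1
  funext N
  simp only [Pi.add_apply, ← sum_add_distrib, add_sub_cancel]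

lemma tendsto_lerchSum (hx : ‖x‖ ≤ 1) (hx1 : x ≠ 1) {q : ℕ} (hq : 1 ≤ q) {w : ℂ}
    (hw : 0 < w.re) :
    Tendsto (fun N => ∑ k ∈ range N, x ^ k / ((k : ℂ) + w) ^ q) atTop (𝓝 (lerchSum x q w)) := by
  refine CauchySeq.tendsto_seqLim ?_
  rcases hq.eq_or_lt with rfl | hq
  · simpa only [pow_one] using cauchySeq_lerchSum_one hx hx1 hw
  · exact (summable_lerchSum_term hx hw hq).hasSum.tendsto_sum_nat.cauchySeq

lemma lerchSum_eq_tsum (hx : ‖x‖ ≤ 1) {q : ℕ} (hq : 2 ≤ q) {w : ℂ} (hw : 0 < w.re) :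
    lerchSum x q w = ∑' k : ℕ, x ^ k / ((k : ℂ) + w) ^ q :=
  seqLim_eq_of_tendsto (summable_lerchSum_term hx hw hq).hasSum.tendsto_sum_nat

lemma hasDerivAt_pow_div_natCast_add_pow (x : ℂ) (k q : ℕ) {w : ℂ} (hw : (k : ℂ) + w ≠ 0) :
    HasDerivAt (fun z : ℂ => x ^ k / ((k : ℂ) + z) ^ q)
      (-q * (x ^ k / ((k : ℂ) + w) ^ (q + 1))) w := by
  have := ((((hasDerivAt_id' w).const_add (k : ℂ)).fun_pow q).fun_inv (pow_ne_zero q hw)).const_mul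
    (x ^ k)
  simp only [div_eq_mul_inv] at this ⊢
  refine this.congr_deriv ?_
  rcases q with _ | q
  · simp
  · field_simp
    push_cast
    ring

lemma hasDerivAt_lerchSum (hx : ‖x‖ ≤ 1) (hx1 : x ≠ 1) {q : ℕ} (hq : 1 ≤ q) {w : ℂ}
    (hw : 0 < w.re) :
    HasDerivAt (lerchSum x q) (-q * lerchSum x (q + 1) w) w := by
  set δ := w.re / 2
  have hδ : 0 < δ := half_pos hw
  have hU : IsOpen {z : ℂ | δ < z.re} := isOpen_lt continuous_const Complex.continuous_re
  have hpos : ∀ z ∈ {z : ℂ | δ < z.re}, 0 < z.re := fun z hz => hδ.trans hz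
  have hunif : TendstoUniformlyOn
      (fun N z => ∑ k ∈ range N, -q * (x ^ k / ((k : ℂ) + z) ^ (q + 1)))
      (fun z => -q * lerchSum x (q + 1) z) atTop {z : ℂ | δ < z.re} := by
    refine (tendstoUniformlyOn_tsum_nat
      ((summable_inv_natCast_add_pow hδ (by omega : 2 ≤ q + 1)).mul_left ‖(-q : ℂ)‖)
      fun k z hz => ?_).congr_right fun z hz => ?_
    · rw [norm_mul]
      exact mul_le_mul_of_nonneg_left
        (norm_pow_div_natCast_add_pow_le hx hδ hz.le k _) (norm_nonneg _)
    · dsimp only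
      rw [tsum_mul_left, lerchSum_eq_tsum hx (by omega) (hpos z hz)]
  refine hasDerivAt_of_tendstoUniformlyOn hU hunif
    (Eventually.of_forall fun N z hz => HasDerivAt.fun_sum fun k _ => ?_)
    (fun z hz => tendsto_lerchSum hx hx1 hq (hpos z hz)) (half_lt_self hw)
  exact hasDerivAt_pow_div_natCast_add_pow x k q (natCast_add_ne_zero (hpos z hz) k)

lemma iteratedDeriv_lerchSum (hx : ‖x‖ ≤ 1) (hx1 : x ≠ 1) {q : ℕ} (hq : 1 ≤ q) (k : ℕ)
    {w : ℂ} (hw : 0 < w.re) :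
    iteratedDeriv k (lerchSum x q) w = (-1) ^ k * q.ascFactorial k * lerchSum x (q + k) w := by
  induction k generalizing w with
  | zero => simp
  | succ k ih =>
    have hU : IsOpen {z : ℂ | 0 < z.re} := isOpen_lt continuous_const Complex.continuous_re
    have heq : iteratedDeriv k (lerchSum x q)
        =ᶠ[𝓝 w] fun z => (-1) ^ k * q.ascFactorial k * lerchSum x (q + k) z :=
      eventually_of_mem (hU.mem_nhds hw) fun z hz => ih hz
    rw [iteratedDeriv_succ, heq.deriv_eq,
      ((hasDerivAt_lerchSum hx hx1 (by omega) hw).const_mul _).deriv, Nat.ascFactorial_succ,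
      ← add_assoc]
    push_cast
    ring

lemma re_pos_of_norm_sub_lt_re {a z : ℂ} (h : ‖z - a‖ < a.re) : 0 < z.re := by
  have := (abs_le.1 (Complex.abs_re_le_norm (z - a))).1
  rw [Complex.sub_re] at this
  linarith

lemma hasSum_lerchSum_taylor (hx : ‖x‖ ≤ 1) (hx1 : x ≠ 1) {q : ℕ} (hq : 1 ≤ q) {a z : ℂ}
    (hz : ‖z - a‖ < a.re) :
    HasSum (fun k => ((k + q - 1).choose (q - 1) : ℂ) * (-1) ^ k * lerchSum x (k + q) a
      * (z - a) ^ k) (lerchSum x q z) := by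
  have hdiff : DifferentiableOn ℂ (lerchSum x q) (Metric.ball a a.re) := fun y hy =>
    (hasDerivAt_lerchSum hx hx1 hq (re_pos_of_norm_sub_lt_re (mem_ball_iff_norm.1 hy)))
      |>.differentiableAt.differentiableWithinAt
  refine (Complex.hasSum_taylorSeries_on_ball hdiff (mem_ball_iff_norm.2 hz)).congr_fun
    fun k => ?_
  have ha : 0 < a.re := (norm_nonneg _).trans_lt hz
  obtain ⟨q, rfl⟩ := Nat.exists_eq_add_of_le' hq
  rw [iteratedDeriv_lerchSum hx hx1 hq k ha, Nat.ascFactorial_eq_factorial_mul_choose,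
    smul_eq_mul, smul_eq_mul, show k + (q + 1) - 1 = k + q by omega, Nat.add_sub_cancel,
    add_comm q k, ← Nat.choose_symm_add, add_comm (q + 1) k]
  have : (k.factorial : ℂ) ≠ 0 := by exact_mod_cast k.factorial_ne_zero
  push_cast
  field_simp

lemma sum_Icc_one_add (f : ℕ → ℂ) (n N : ℕ) :
    ∑ j ∈ Icc 1 (n + N), f j = ∑ j ∈ Icc 1 n, f j + ∑ k ∈ range N, f (n + 1 + k) := by
  induction N with
  | zero => simp
  | succ N ih =>
    rw [← add_assoc, sum_Icc_succ_top (by omega), ih, sum_range_succ, add_assoc,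
      add_right_comm n 1 N]

lemma tpoly_sub_tFin (hx : ‖x‖ ≤ 1) (hx1 : x ≠ 1) {q : ℕ} (hq : 1 ≤ q) (n : ℕ) :
    tpoly q x - tFin q x n = x ^ (n + 1) * lerchSum x q (n + 1 / 2) := by
  have hsum : ∀ N, ∑ j ∈ Icc 1 (n + N), x ^ j / ((j : ℂ) - 1 / 2) ^ q
      = tFin q x n + x ^ (n + 1) * ∑ k ∈ range N, x ^ k / ((k : ℂ) + (n + 1 / 2)) ^ q := by
    intro N
    rw [sum_Icc_one_add, tFin, mul_sum]
    congr 1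
    refine sum_congr rfl fun k _ => ?_
    rw [pow_add, mul_div_assoc]
    push_cast
    ring_nf
  have hlim : Tendsto (fun N => ∑ j ∈ Icc 1 (N + n), x ^ j / ((j : ℂ) - 1 / 2) ^ q) atTop
      (𝓝 (tFin q x n + x ^ (n + 1) * lerchSum x q (n + 1 / 2))) := by
    simp only [add_comm _ n, hsum]
    exact ((tendsto_lerchSum hx hx1 hq (by simp; positivity)).const_mul _).const_add _
  rw [tpoly, seqLim_eq_of_tendsto ((tendsto_add_atTop_iff_nat n).1 hlim), add_sub_cancel_left]

lemma phi_eq_lerchSum (x : ℂ) : (fun w => phi w x) = lerchSum x 1 := by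
  funext w
  simp only [phi, lerchSum, pow_one]
end

theorem stmt1 (x : ℂ) (hx : ∃ m : ℕ, 0 < m ∧ x ^ m = 1) (hx1 : x ≠ 1)
    (p : ℕ) (hp : 1 ≤ p) (n : ℕ) (hn : 1 ≤ n) (s : ℂ) (hs : ‖s - n‖ < 1) :
    (-1 : ℂ) ^ (p - 1) * iteratedDeriv (p - 1) (fun w => phi w x) (s + 1/2)
        / ((p - 1).factorial : ℂ)
      = x ^ (-(n : ℤ) - 1) * seqLim (fun N => ∑ k ∈ Finset.range N,
          ((k + p - 1).choose (p - 1) : ℂ) * (-1 : ℂ) ^ k *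
            (tpoly (k + p) x - tFin (k + p) x n) * (s - n) ^ k) := by
  obtain ⟨m, hm, hxm⟩ := hx
  have hxu : ‖x‖ = 1 := Complex.norm_eq_one_of_pow_eq_one hxm hm.ne'
  have hx0 : x ≠ 0 := norm_ne_zero_iff.1 (by rw [hxu]; exact one_ne_zero)
  have hz : ‖s + 1 / 2 - (n + 1 / 2)‖ < ((n : ℂ) + 1 / 2).re := by
    have : (1 : ℝ) ≤ n := by exact_mod_cast hn
    rw [add_sub_add_right_eq_sub]
    simp only [Complex.add_re, Complex.natCast_re]
    norm_num
    linarith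
  have hLHS : iteratedDeriv (p - 1) (fun w => phi w x) (s + 1 / 2)
      = (-1) ^ (p - 1) * (p - 1).factorial * lerchSum x p (s + 1 / 2) := by
    rw [phi_eq_lerchSum, iteratedDeriv_lerchSum hxu.le hx1 le_rfl _ (re_pos_of_norm_sub_lt_re hz),
      Nat.one_ascFactorial, Nat.add_sub_cancel' hp]
  have hRHS : seqLim (fun N => ∑ k ∈ Finset.range N, ((k + p - 1).choose (p - 1) : ℂ) *
      (-1 : ℂ) ^ k * (tpoly (k + p) x - tFin (k + p) x n) * (s - n) ^ k)
      = x ^ (n + 1) * lerchSum x p (s + 1 / 2) := by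
    refine seqLim_eq_of_tendsto
      ((((hasSum_lerchSum_taylor hxu.le hx1 hp hz).mul_left (x ^ (n + 1))).tendsto_sum_nat).congr
        fun N => ?_)
    refine sum_congr rfl fun k _ => ?_
    rw [tpoly_sub_tFin hxu.le hx1 (by omega), add_sub_add_right_eq_sub]
    ring
  rw [hLHS, hRHS, show -(n : ℤ) - 1 = -((n + 1 : ℕ) : ℤ) by push_cast; ring, zpow_neg,
    zpow_natCast, inv_mul_cancel_left₀ (pow_ne_zero _ hx0), ← mul_assoc, ← mul_assoc, ← mul_pow]
  have : ((p - 1).factorial : ℂ) ≠ 0 := by exact_mod_cast (p - 1).factorial_ne_zero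
  field_simp
  simp
end

section
/- Let x, x_1, x_2 be roots of unity, and let p_1, p_2, q ≥ 1 be integers with (p_1,x_1) ≠ (1,1) and (q,x) ≠ (1,1). Then T_{p_1,p_2;q}(x_1,x_2;x) = −ti_{p_2,q,p_1}(x_2,x,x_1) − ti_{p_2+q,p_1}(x_2·x, x_1) + ti_{p_1}(x_1)·( ti_{p_2,q}(x_2,x) + ti_{p_2+q}(x_2·x) ). -/
open Filter Finset
open Topology

/-- Cyclotomic double t-value `ti_{k1,k2}(z1,z2) = ∑_{0<n1<n2} z1^{n1} z2^{n2}/((n1-1/2)^{k1}(n2-1/2)^{k2})`,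
as limit of partial sums. -/
noncomputable def ti2 (k1 k2 : ℕ) (z1 z2 : ℂ) : ℂ :=
  seqLim (fun N => ∑ n2 ∈ Finset.Icc 1 N, ∑ n1 ∈ Finset.Icc 1 (n2 - 1),
    z1 ^ n1 * z2 ^ n2 / (((n1 : ℂ) - 1/2) ^ k1 * ((n2 : ℂ) - 1/2) ^ k2))

/-- Cyclotomic triple t-value, as limit of partial sums. -/
noncomputable def ti3 (k1 k2 k3 : ℕ) (z1 z2 z3 : ℂ) : ℂ :=
  seqLim (fun N => ∑ n3 ∈ Finset.Icc 1 N, ∑ n2 ∈ Finset.Icc 1 (n3 - 1),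
    ∑ n1 ∈ Finset.Icc 1 (n2 - 1),
      z1 ^ n1 * z2 ^ n2 * z3 ^ n3 /
        (((n1 : ℂ) - 1/2) ^ k1 * ((n2 : ℂ) - 1/2) ^ k2 * ((n3 : ℂ) - 1/2) ^ k3))

/-- Quadratic cyclotomic Euler T-sum
`T_{p1,p2;q}(z1,z2;z) = ∑_{n=1}^∞ t_n(p1;z1) t_n(p2;z2) z^n/(n-1/2)^q`. -/
noncomputable def T2sum (p1 p2 q : ℕ) (z1 z2 z : ℂ) : ℂ :=
  seqLim (fun N => ∑ n ∈ Finset.Icc 1 N,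
    tFin p1 z1 n * tFin p2 z2 n * z ^ n / ((n : ℂ) - 1/2) ^ q)


lemma tendsto_sqrt_atTop : Tendsto (fun n : ℕ => Real.sqrt n) atTop atTop := by
  apply tendsto_atTop_atTop.2
  intro b
  refine ⟨Nat.ceil (b^2), fun n hn => ?_⟩
  have h1 : (b^2 : ℝ) ≤ (n:ℝ) := le_trans (Nat.le_ceil _) (by exact_mod_cast hn)
  calc b ≤ |b| := le_abs_self b
  _ = Real.sqrt (b^2) := (Real.sqrt_sq_eq_abs b).symm
  _ ≤ Real.sqrt n := Real.sqrt_le_sqrt h1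

lemma tendsto_div_sqrt (c : ℝ) : Tendsto (fun n : ℕ => c / Real.sqrt n) atTop (𝓝 0) := by
  have := (tendsto_sqrt_atTop.inv_tendsto_atTop).const_mul c
  simpa [div_eq_mul_inv, Pi.inv_apply] using this

lemma sum_inv_sqrt_le (n : ℕ) : ∑ k ∈ Icc 1 n, 1 / Real.sqrt k ≤ 2 * Real.sqrt n := by
  induction n with
  | zero => simp
  | succ n ih =>
    rw [Finset.sum_Icc_succ_top (by omega)]
    have h1 : Real.sqrt n ≤ Real.sqrt (n+1) := Real.sqrt_le_sqrt (by push_cast; linarith)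
    have h2 : (0:ℝ) < Real.sqrt ((n:ℝ)+1) := Real.sqrt_pos.2 (by positivity)
    have h3 : Real.sqrt n * Real.sqrt ((n:ℝ)+1) ≤ (n:ℝ) + 1/2 := by
      have h4 : Real.sqrt n * Real.sqrt ((n:ℝ)+1) = Real.sqrt ((n:ℝ)*((n:ℝ)+1)) := by
        rw [← Real.sqrt_mul (by positivity)]
      rw [h4]
      have h6 : ((n:ℝ)*((n:ℝ)+1)) ≤ ((n:ℝ)+1/2)^2 := by nlinarith
      calc Real.sqrt ((n:ℝ)*((n:ℝ)+1)) ≤ Real.sqrt (((n:ℝ)+1/2)^2) := Real.sqrt_le_sqrt h6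
      _ = (n:ℝ)+1/2 := Real.sqrt_sq (by positivity)
    have h5 : Real.sqrt ((n:ℝ)+1) * Real.sqrt ((n:ℝ)+1) = (n:ℝ)+1 :=
      Real.mul_self_sqrt (by positivity)
    have key : 1 / Real.sqrt ((n:ℝ)+1) ≤ 2 * Real.sqrt ((n:ℝ)+1) - 2 * Real.sqrt n := by
      rw [div_le_iff₀ h2]
      nlinarith
    push_cast
    push_cast at ih key
    linarith


lemma rpos {k : ℕ} (hk : 1 ≤ k) : (0:ℝ) < (k:ℝ) - 1/2 := by
  have : (1:ℝ) ≤ (k:ℝ) := by exact_mod_cast hk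
  linarith

lemma inv_rpow_le {p k : ℕ} (hp : 1 ≤ p) (hk : 1 ≤ k) :
    1 / ((k:ℝ) - 1/2) ^ p ≤ 2 ^ p / Real.sqrt k := by
  have hk1 : (1:ℝ) ≤ (k:ℝ) := by exact_mod_cast hk
  have h1 : (k:ℝ)/2 ≤ (k:ℝ) - 1/2 := by linarith
  have h2 : ((k:ℝ)/2) ^ p ≤ ((k:ℝ) - 1/2) ^ p := pow_le_pow_left₀ (by linarith) h1 p
  have h3 : (k:ℝ) ^ p / 2 ^ p = ((k:ℝ)/2)^p := (div_pow _ _ _).symm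
  have h4 : (k:ℝ) ≤ (k:ℝ)^p := le_self_pow₀ hk1 (by omega)
  have h5 : Real.sqrt k ≤ (k:ℝ) := (Real.sqrt_le_left (by positivity)).2 (by nlinarith)
  have hsq : (0:ℝ) < Real.sqrt k := Real.sqrt_pos.2 (by linarith)
  rw [div_le_div_iff₀ (pow_pos (rpos hk) p) hsq]
  have key : Real.sqrt k ≤ ((k:ℝ)-1/2)^p * 2^p := by
    calc Real.sqrt k ≤ (k:ℝ)^p := le_trans h5 h4
    _ = ((k:ℝ)/2)^p * 2^p := by rw [← h3]; field_simp
    _ ≤ ((k:ℝ)-1/2)^p * 2^p := by nlinarith [h2, pow_pos (show (0:ℝ) < 2 by norm_num) p]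
  nlinarith [key]

lemma norm_wc (p n : ℕ) (hn : 1 ≤ n) : ‖((n:ℂ) - 1/2) ^ p‖ = ((n:ℝ) - 1/2) ^ p := by
  rw [norm_pow]
  congr 1
  rw [show ((n:ℂ)-1/2) = (((n:ℝ)-1/2:ℝ):ℂ) by push_cast; ring, Complex.norm_real]
  exact abs_of_pos (rpos hn)


lemma norm_term_le {p k : ℕ} (z : ℂ) (hz : ‖z‖ = 1) (hp : 1 ≤ p) (hk : 1 ≤ k) :
    ‖z ^ k / ((k:ℂ) - 1/2) ^ p‖ ≤ 2 ^ p / Real.sqrt k := by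
  rw [norm_div, norm_pow, hz, one_pow, norm_wc p k hk]
  calc 1 / ((k:ℝ)-1/2)^p ≤ 2^p / Real.sqrt k := inv_rpow_le hp hk
  _ ≤ _ := le_refl _

lemma tFin_norm_le {p : ℕ} (z : ℂ) (hz : ‖z‖ = 1) (hp : 1 ≤ p) (n : ℕ) :
    ‖tFin p z n‖ ≤ 2 ^ (p+1) * Real.sqrt n := by
  calc ‖tFin p z n‖ ≤ ∑ k ∈ Icc 1 n, ‖z ^ k / ((k:ℂ) - 1/2) ^ p‖ := norm_sum_le _ _
  _ ≤ ∑ k ∈ Icc 1 n, 2^p / Real.sqrt k := by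
      apply Finset.sum_le_sum
      intro k hk
      exact norm_term_le z hz hp (Finset.mem_Icc.1 hk).1
  _ = 2^p * ∑ k ∈ Icc 1 n, 1 / Real.sqrt k := by rw [Finset.mul_sum]; congr 1; funext k; ring
  _ ≤ 2^p * (2 * Real.sqrt n) := by
      have := sum_inv_sqrt_le n
      nlinarith [pow_pos (show (0:ℝ) < 2 by norm_num) p]
  _ = 2^(p+1) * Real.sqrt n := by ring

lemma tFin_succ (p : ℕ) (z : ℂ) (n : ℕ) :
    tFin p z (n+1) = tFin p z n + z^(n+1) / (((n:ℂ)+1) - 1/2) ^ p := by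
  unfold tFin
  rw [Finset.sum_Icc_succ_top (by omega)]
  push_cast
  ring

lemma pow_sub_pow_le' (s r : ℝ) (hs : 0 ≤ s) (hsr : s ≤ r) (p : ℕ) :
    r^(p+1) - s^(p+1) ≤ (p+1) * r^p * (r - s) := by
  induction p with
  | zero => simp
  | succ p ih =>
    have h1 : s^(p+1) ≤ r^(p+1) := pow_le_pow_left₀ hs hsr _
    have hr : 0 ≤ r := le_trans hs hsr
    have h2 : r^(p+1+1) - s^(p+1+1) = r*(r^(p+1) - s^(p+1)) + (r-s)*s^(p+1) := by ring
    have h3 : r*(r^(p+1) - s^(p+1)) ≤ r*((p+1) * r^p * (r - s)) := by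
      apply mul_le_mul_of_nonneg_left ih hr
    have h4 : (r-s)*s^(p+1) ≤ (r-s)*r^(p+1) := by
      apply mul_le_mul_of_nonneg_left h1 (by linarith)
    have h5 : r*((p+1) * r^p * (r-s)) = (p+1) * r^(p+1) * (r-s) := by ring
    push_cast
    push_cast at h3 h5
    nlinarith


lemma inv_pow_diff_le {p n : ℕ} (hp : 1 ≤ p) (hn : 2 ≤ n) :
    0 ≤ 1 / ((n:ℝ) - 1/2) ^ p - 1 / (((n:ℝ)+1) - 1/2) ^ p ∧
    1 / ((n:ℝ) - 1/2) ^ p - 1 / (((n:ℝ)+1) - 1/2) ^ p ≤ 2 * p / (n:ℝ)^2 := by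
  obtain ⟨m, rfl⟩ : ∃ m, p = m + 1 := ⟨p - 1, by omega⟩
  set s : ℝ := (n:ℝ) - 1/2 with hs
  set r : ℝ := ((n:ℝ)+1) - 1/2 with hr
  have hn2 : (2:ℝ) ≤ (n:ℝ) := by exact_mod_cast hn
  have hs1 : (1:ℝ) ≤ s := by rw [hs]; linarith
  have hspos : (0:ℝ) < s := by linarith
  have hrpos : (0:ℝ) < r := by rw [hr]; linarith
  have hsr : s ≤ r := by rw [hs, hr]; linarith
  have hsp : (0:ℝ) < s^(m+1) := pow_pos hspos _
  have hrp : (0:ℝ) < r^(m+1) := pow_pos hrpos _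
  have hmono : s^(m+1) ≤ r^(m+1) := pow_le_pow_left₀ (le_of_lt hspos) hsr _
  constructor
  · have : 1/r^(m+1) ≤ 1/s^(m+1) := by
      apply one_div_le_one_div_of_le hsp hmono
    linarith
  · have hdiff : r^(m+1) - s^(m+1) ≤ (m+1) * r^m := by
      have := pow_sub_pow_le' s r (le_of_lt hspos) hsr m
      have hrs : r - s = 1 := by rw [hs, hr]; ring
      rw [hrs] at this
      linarith
    have heq : 1/s^(m+1) - 1/r^(m+1) = (r^(m+1) - s^(m+1)) / (s^(m+1) * r^(m+1)) := by
      field_simp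
    rw [heq]
    have hsm : s ≤ s^(m+1) := le_self_pow₀ hs1 (by omega)
    -- s^(m+1) * r^(m+1) ≥ s * r^m * r ≥ (n/2) * r^m * n
    have hrm : (0:ℝ) < r^m := pow_pos hrpos _
    have hbound : (n:ℝ)^2 / 2 * r^m ≤ s^(m+1) * r^(m+1) := by
      have h1 : s^(m+1) * r^(m+1) = s^(m+1) * r * r^m := by ring
      rw [h1]
      have h2 : (n:ℝ)^2/2 ≤ s^(m+1) * r := by
        have : (n:ℝ)/2 ≤ s := by rw [hs]; linarith
        have h3 : (n:ℝ)/2 ≤ s^(m+1) := le_trans this hsm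
        have h4 : (n:ℝ) ≤ r := by rw [hr]; linarith
        nlinarith
      nlinarith
    have hnum : (0:ℝ) ≤ r^(m+1) - s^(m+1) := by linarith
    calc (r^(m+1) - s^(m+1)) / (s^(m+1) * r^(m+1)) ≤ (((m:ℝ)+1) * r^m) / ((n:ℝ)^2/2 * r^m) := by
          apply div_le_div₀ (by positivity) hdiff (by positivity) hbound
    _ = 2*((m:ℝ)+1)/(n:ℝ)^2 := by field_simp
    _ = 2 * (((m+1):ℕ):ℝ) / (n:ℝ)^2 := by push_cast; ring


lemma summable_sqrt_div : Summable (fun n : ℕ => Real.sqrt n / (n:ℝ)^2) := by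
  have h : (fun n : ℕ => Real.sqrt n / (n:ℝ)^2) = (fun n : ℕ => 1 / (n:ℝ) ^ ((3:ℝ)/2)) := by
    funext n
    rcases Nat.eq_zero_or_pos n with h0 | h0
    · subst h0; norm_num [Real.zero_rpow]
    · have hn : (0:ℝ) < n := by exact_mod_cast h0
      rw [Real.sqrt_eq_rpow, show ((n:ℝ)^2) = (n:ℝ)^((2:ℕ):ℝ) from (Real.rpow_natCast _ 2).symm,
        ← Real.rpow_sub hn, one_div, one_div, ← Real.rpow_neg (le_of_lt hn)]
      norm_num
  rw [h]
  exact Real.summable_one_div_nat_rpow.2 (by norm_num)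

lemma geom_bound (z : ℂ) (hz1 : ‖z‖ = 1) (hz : z ≠ 1) (n : ℕ) :
    ‖∑ k ∈ Icc 1 n, z ^ k‖ ≤ 2 / ‖z - 1‖ := by
  have hne : z - 1 ≠ 0 := sub_ne_zero.2 hz
  have hpos : (0:ℝ) < ‖z - 1‖ := norm_pos_iff.2 hne
  have key : ∑ k ∈ Icc 1 n, z ^ k = z * ((z^n - 1)/(z - 1)) := by
    induction n with
    | zero => simp
    | succ n ih =>
      rw [Finset.sum_Icc_succ_top (by omega), ih]
      field_simp
      ring
  rw [key]
  rw [norm_mul, hz1, one_mul, norm_div]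
  rw [div_le_div_iff₀ hpos hpos]
  have h1 : ‖z^n - 1‖ ≤ 2 := by
    calc ‖z^n - 1‖ ≤ ‖z^n‖ + ‖(1:ℂ)‖ := norm_sub_le _ _
    _ = 2 := by rw [norm_pow, hz1]; norm_num
  nlinarith

lemma sum_Icc_shift (f : ℕ → ℂ) (N : ℕ) :
    ∑ n ∈ Icc 1 N, f n = ∑ n ∈ range (N+1), f n - f 0 := by
  induction N with
  | zero => simp
  | succ N ih =>
    rw [Finset.sum_Icc_succ_top (by omega), Finset.sum_range_succ, ih]
    ring

-- Abel summation identity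
lemma abel_identity (z : ℂ) (b : ℕ → ℂ) (N : ℕ) :
    ∑ n ∈ Icc 1 N, z ^ n * b n
      = (∑ k ∈ Icc 1 N, z ^ k) * b N
        + ∑ n ∈ range N, (∑ k ∈ Icc 1 n, z ^ k) * (b n - b (n+1)) := by
  induction N with
  | zero => simp
  | succ N ih =>
    rw [Finset.sum_Icc_succ_top (a := 1) (by omega), Finset.sum_range_succ, ih,
      Finset.sum_Icc_succ_top (a := 1) (f := fun k => z ^ k) (by omega)]
    ring


lemma inv_pow_le_two_div {p n : ℕ} (hp : 1 ≤ p) (hn : 2 ≤ n) :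
    1 / ((n:ℝ) - 1/2) ^ p ≤ 2 / (n:ℝ) := by
  have hn2 : (2:ℝ) ≤ (n:ℝ) := by exact_mod_cast hn
  have hs1 : (1:ℝ) ≤ (n:ℝ) - 1/2 := by linarith
  have h1 : (n:ℝ) - 1/2 ≤ ((n:ℝ)-1/2)^p := le_self_pow₀ hs1 (by omega)
  have h2 : (n:ℝ)/2 ≤ (n:ℝ)-1/2 := by linarith
  have hpos : (0:ℝ) < ((n:ℝ)-1/2)^p := by positivity
  rw [div_le_div_iff₀ hpos (by linarith : (0:ℝ) < (n:ℝ))]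
  nlinarith

lemma sqrt_div_eq {n : ℕ} (hn : 1 ≤ n) :
    1 / (Real.sqrt n * (n:ℝ)) = Real.sqrt n / (n:ℝ)^2 := by
  have hn1 : (1:ℝ) ≤ (n:ℝ) := by exact_mod_cast hn
  have hs : Real.sqrt n * Real.sqrt n = (n:ℝ) := Real.mul_self_sqrt (by linarith)
  have hspos : (0:ℝ) < Real.sqrt n := Real.sqrt_pos.2 (by linarith)
  rw [div_eq_div_iff (by positivity) (by positivity)]
  nlinarith

lemma wc_ne {p n : ℕ} (hn : 1 ≤ n) : ((n:ℂ) - 1/2)^p ≠ 0 := by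
  intro h
  have h2 := norm_wc p n hn
  rw [h, norm_zero] at h2
  exact absurd h2.symm (ne_of_gt (pow_pos (rpos hn) p))

lemma main_conv (z : ℂ) (hz1 : ‖z‖ = 1) (p : ℕ) (hp : 1 ≤ p)
    (hcase : z ≠ 1 ∨ 2 ≤ p) (u : ℕ → ℂ) (M C : ℝ) (hM : 0 ≤ M)
    (hu : ∀ n, 1 ≤ n → ‖u n‖ ≤ M * Real.sqrt n)
    (hΔ : ∀ n, 2 ≤ n → ‖u (n+1) - u n‖ ≤ C / Real.sqrt n) :
    ∃ L, Tendsto (fun N => ∑ n ∈ Icc 1 N, u n * z ^ n / ((n:ℂ) - 1/2) ^ p) atTop (𝓝 L) := by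
  have hC : 0 ≤ C := by
    have h0 := hΔ 2 le_rfl
    have h1 := norm_nonneg (u 3 - u 2)
    have hs2 : (0:ℝ) < Real.sqrt (2:ℕ) := Real.sqrt_pos.2 (by norm_num)
    by_contra hc
    push_neg at hc
    have : C / Real.sqrt (2:ℕ) < 0 := div_neg_of_neg_of_pos hc hs2
    linarith
  rcases hcase with hz | hp2
  · -- Dirichlet branch
    set b : ℕ → ℂ := fun n => u n / ((n:ℂ) - 1/2) ^ p with hb
    set A : ℕ → ℂ := fun n => ∑ k ∈ Icc 1 n, z ^ k with hA
    set K : ℝ := 2 / ‖z - 1‖ with hK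
    have hKpos : 0 ≤ K := by positivity
    have hAb : ∀ n, ‖A n‖ ≤ K := fun n => geom_bound z hz1 hz n
    -- norm of b
    have hbn : ∀ n, 2 ≤ n → ‖b n‖ ≤ 2 * M / Real.sqrt n := by
      intro n hn
      have hn1 : 1 ≤ n := by omega
      have hw := norm_wc p n hn1
      rw [hb]
      simp only []
      rw [norm_div, hw]
      have h1 := hu n hn1
      have h2 := inv_pow_le_two_div hp (p := p) hn
      have hpos : (0:ℝ) < ((n:ℝ)-1/2)^p := pow_pos (rpos hn1) p
      have hnn : (0:ℝ) < (n:ℝ) := by exact_mod_cast Nat.lt_of_lt_of_le Nat.zero_lt_two hn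
      have hspos : (0:ℝ) < Real.sqrt n := Real.sqrt_pos.2 hnn
      have hs : Real.sqrt n * Real.sqrt n = (n:ℝ) := Real.mul_self_sqrt (le_of_lt hnn)
      rw [div_le_div_iff₀ hpos hspos]
      have h5 : (n:ℝ) ≤ 2 * ((n:ℝ)-1/2)^p := by
        rw [div_le_div_iff₀ hpos hnn] at h2
        nlinarith
      calc ‖u n‖ * Real.sqrt n ≤ (M * Real.sqrt n) * Real.sqrt n := by
            apply mul_le_mul_of_nonneg_right h1 (Real.sqrt_nonneg _)
      _ = M * (n:ℝ) := by rw [mul_assoc, hs]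
      _ ≤ 2 * M * ((n:ℝ)-1/2)^p := by nlinarith
    -- variation bound
    have hvar : ∀ n, 2 ≤ n → ‖b n - b (n+1)‖ ≤ (2*C + 2*p*M) * (Real.sqrt n / (n:ℝ)^2) := by
      intro n hn
      have hn1 : 1 ≤ n := by omega
      have hnn : (0:ℝ) < (n:ℝ) := by exact_mod_cast Nat.lt_of_lt_of_le Nat.zero_lt_two hn
      have hspos : (0:ℝ) < Real.sqrt n := Real.sqrt_pos.2 hnn
      have hw1 : ((n:ℂ) - 1/2) ^ p ≠ 0 := wc_ne hn1
      have hw2 : (((n+1:ℕ):ℂ) - 1/2) ^ p ≠ 0 := wc_ne (by omega)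
      have hsplit : b n - b (n+1)
          = (u n - u (n+1)) / (((n+1:ℕ):ℂ) - 1/2) ^ p
            + u n * (1 / ((n:ℂ) - 1/2) ^ p - 1 / (((n+1:ℕ):ℂ) - 1/2) ^ p) := by
        rw [hb]
        simp only []
        field_simp
        ring
      rw [hsplit]
      have hT1 : ‖(u n - u (n+1)) / (((n+1:ℕ):ℂ) - 1/2) ^ p‖ ≤ 2*C * (Real.sqrt n / (n:ℝ)^2) := by
        rw [norm_div, norm_wc p (n+1) (by omega)]
        have hd := hΔ n hn
        have hnorm : ‖u n - u (n+1)‖ = ‖u (n+1) - u n‖ := norm_sub_rev _ _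
        have hinv : 1 / (((n+1:ℕ):ℝ) - 1/2) ^ p ≤ 2 / ((n+1:ℕ):ℝ) := inv_pow_le_two_div hp (by omega)
        have hpos1 : (0:ℝ) < (((n+1:ℕ):ℝ) - 1/2) ^ p := pow_pos (rpos (by omega)) p
        have hn1r : (0:ℝ) < ((n+1:ℕ):ℝ) := by positivity
        calc ‖u n - u (n+1)‖ / (((n+1:ℕ):ℝ) - 1/2) ^ p
            ≤ (C / Real.sqrt n) * (2 / ((n+1:ℕ):ℝ)) := by
              rw [div_eq_mul_one_div ‖u n - u (n+1)‖]
              apply mul_le_mul (hnorm ▸ hd) hinv (by positivity) (by positivity)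
        _ ≤ (C / Real.sqrt n) * (2 / (n:ℝ)) := by
              have : (2:ℝ) / ((n+1:ℕ):ℝ) ≤ 2 / (n:ℝ) := by
                apply div_le_div_of_nonneg_left (by norm_num) hnn (by push_cast; linarith)
              apply mul_le_mul_of_nonneg_left this (by positivity)
        _ = 2*C * (1 / (Real.sqrt n * (n:ℝ))) := by field_simp
        _ = 2*C * (Real.sqrt n / (n:ℝ)^2) := by rw [sqrt_div_eq hn1]
      have hT2 : ‖u n * (1 / ((n:ℂ) - 1/2) ^ p - 1 / (((n+1:ℕ):ℂ) - 1/2) ^ p)‖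
          ≤ 2*p*M * (Real.sqrt n / (n:ℝ)^2) := by
        rw [norm_mul]
        have hcast : (1 / ((n:ℂ) - 1/2) ^ p - 1 / (((n+1:ℕ):ℂ) - 1/2) ^ p)
            = (((1 / ((n:ℝ) - 1/2) ^ p - 1 / (((n:ℝ)+1) - 1/2) ^ p) : ℝ) : ℂ) := by
          push_cast
          norm_num
        rw [hcast, Complex.norm_real, Real.norm_eq_abs]
        obtain ⟨hd0, hd1⟩ := inv_pow_diff_le hp hn (p := p)
        rw [abs_of_nonneg hd0]
        calc ‖u n‖ * (1 / ((n:ℝ) - 1/2) ^ p - 1 / (((n:ℝ)+1) - 1/2) ^ p)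
            ≤ (M * Real.sqrt n) * (2 * p / (n:ℝ)^2) := by
              apply mul_le_mul (hu n hn1) hd1 hd0 (by positivity)
        _ = 2*p*M * (Real.sqrt n / (n:ℝ)^2) := by ring
      calc ‖(u n - u (n+1)) / (((n+1:ℕ):ℂ) - 1/2) ^ p
            + u n * (1 / ((n:ℂ) - 1/2) ^ p - 1 / (((n+1:ℕ):ℂ) - 1/2) ^ p)‖
          ≤ ‖(u n - u (n+1)) / (((n+1:ℕ):ℂ) - 1/2) ^ p‖
            + ‖u n * (1 / ((n:ℂ) - 1/2) ^ p - 1 / (((n+1:ℕ):ℂ) - 1/2) ^ p)‖ := norm_add_le _ _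
      _ ≤ 2*C * (Real.sqrt n / (n:ℝ)^2) + 2*p*M * (Real.sqrt n / (n:ℝ)^2) := add_le_add hT1 hT2
      _ = (2*C + 2*p*M) * (Real.sqrt n / (n:ℝ)^2) := by ring
    -- summability of the Abel series
    have hsum : Summable (fun n : ℕ => A n * (b n - b (n+1))) := by
      apply Summable.of_norm_bounded_eventually
          (g := fun n : ℕ => K * ((2*C + 2*p*M) * (Real.sqrt n / (n:ℝ)^2)))
      · apply Summable.mul_left
        exact (summable_sqrt_div.mul_left _)
      · rw [Nat.cofinite_eq_atTop]
        filter_upwards [eventually_ge_atTop 2] with n hn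
        rw [norm_mul]
        apply mul_le_mul (hAb n) (hvar n hn) (norm_nonneg _) hKpos
    obtain ⟨V, hV⟩ := hsum
    have hT : Tendsto (fun N => ∑ n ∈ range N, A n * (b n - b (n+1))) atTop (𝓝 V) :=
      hV.tendsto_sum_nat
    have hA0 : Tendsto (fun N => A N * b N) atTop (𝓝 0) := by
      refine squeeze_zero_norm' ?_ (tendsto_div_sqrt (K * (2*M)))
      · filter_upwards [eventually_ge_atTop 2] with n hn
        rw [norm_mul]
        calc ‖A n‖ * ‖b n‖ ≤ K * (2 * M / Real.sqrt n) := by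
              apply mul_le_mul (hAb n) (hbn n hn) (norm_nonneg _) hKpos
        _ = K * (2*M) / Real.sqrt n := by ring
    refine ⟨V, ?_⟩
    have heq : (fun N => ∑ n ∈ Icc 1 N, u n * z ^ n / ((n:ℂ) - 1/2) ^ p)
        = fun N => A N * b N + ∑ n ∈ range N, A n * (b n - b (n+1)) := by
      funext N
      rw [← abel_identity z b N]
      apply Finset.sum_congr rfl
      intro n _
      rw [hb]
      simp only []
      ring
    rw [heq]
    simpa using hA0.add hT
  · -- absolute branch
    have hsum : Summable (fun n : ℕ => u n * z ^ n / ((n:ℂ) - 1/2) ^ p) := by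
      apply Summable.of_norm_bounded_eventually
          (g := fun n : ℕ => 4*M * (Real.sqrt n / (n:ℝ)^2))
      · exact summable_sqrt_div.mul_left _
      · rw [Nat.cofinite_eq_atTop]
        filter_upwards [eventually_ge_atTop 2] with n hn
        have hn1 : 1 ≤ n := by omega
        have hn2 : (2:ℝ) ≤ (n:ℝ) := by exact_mod_cast hn
        rw [norm_div, norm_mul, norm_pow, hz1, one_pow, mul_one, norm_wc p n hn1]
        have hs1 : (1:ℝ) ≤ (n:ℝ) - 1/2 := by linarith
        have hsq : ((n:ℝ)-1/2)^2 ≤ ((n:ℝ)-1/2)^p := pow_le_pow_right₀ hs1 hp2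
        have h4 : (n:ℝ)^2/4 ≤ ((n:ℝ)-1/2)^2 := by nlinarith
        have hpos : (0:ℝ) < ((n:ℝ)-1/2)^p := pow_pos (rpos hn1) p
        have hnn : (0:ℝ) < (n:ℝ) := by linarith
        have hspos : (0:ℝ) < Real.sqrt n := Real.sqrt_pos.2 hnn
        have hs : Real.sqrt n * Real.sqrt n = (n:ℝ) := Real.mul_self_sqrt (le_of_lt hnn)
        rw [div_le_iff₀ hpos]
        calc ‖u n‖ ≤ M * Real.sqrt n := hu n hn1
        _ = 4*M*(Real.sqrt n/(n:ℝ)^2) * ((n:ℝ)^2/4) := by field_simp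
        _ ≤ 4*M*(Real.sqrt n/(n:ℝ)^2) * ((n:ℝ)-1/2)^p := by
            apply mul_le_mul_of_nonneg_left (le_trans h4 hsq) (by positivity)
    obtain ⟨S, hS⟩ := hsum
    refine ⟨S - u 0 * z ^ 0 / ((0:ℂ) - 1/2) ^ p, ?_⟩
    have h1 : Tendsto (fun N => ∑ n ∈ range (N+1), u n * z ^ n / ((n:ℂ) - 1/2) ^ p)
        atTop (𝓝 S) := hS.tendsto_sum_nat.comp (tendsto_add_atTop_nat 1)
    have heq : (fun N => ∑ n ∈ Icc 1 N, u n * z ^ n / ((n:ℂ) - 1/2) ^ p)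
        = fun N => (∑ n ∈ range (N+1), u n * z ^ n / ((n:ℂ) - 1/2) ^ p)
            - u 0 * z ^ 0 / ((0:ℂ) - 1/2) ^ p := by
      funext N
      rw [sum_Icc_shift]
      norm_num
    rw [heq]
    exact h1.sub_const _


lemma finite_abel (f g : ℕ → ℂ) (N : ℕ) :
    ∑ n ∈ Icc 1 N, (∑ k ∈ Icc 1 n, f k) * g n
      = (∑ k ∈ Icc 1 N, f k) * (∑ n ∈ Icc 1 N, g n)
        - ∑ k ∈ Icc 1 N, (∑ n ∈ Icc 1 (k-1), g n) * f k := by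
  induction N with
  | zero => simp
  | succ N ih =>
    rw [Finset.sum_Icc_succ_top (a := 1) (f := fun n => (∑ k ∈ Icc 1 n, f k) * g n) (by omega),
      Finset.sum_Icc_succ_top (a := 1) (f := f) (by omega),
      Finset.sum_Icc_succ_top (a := 1) (f := g) (by omega),
      Finset.sum_Icc_succ_top (a := 1) (f := fun k => (∑ n ∈ Icc 1 (k-1), g n) * f k) (by omega),
      ih, show N + 1 - 1 = N from rfl]
    ring

lemma tFin_tendsto (z : ℂ) (hz1 : ‖z‖ = 1) (p : ℕ) (hp : 1 ≤ p)
    (hcase : z ≠ 1 ∨ 2 ≤ p) : ∃ L, Tendsto (tFin p z) atTop (𝓝 L) := by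
  obtain ⟨L, hL⟩ := main_conv z hz1 p hp hcase (fun _ => 1) 1 0 (by norm_num)
    (fun n hn => by
      simpa using Real.one_le_sqrt.2 (by exact_mod_cast hn : (1:ℝ) ≤ (n:ℝ)))
    (fun n _ => by norm_num)
  refine ⟨L, ?_⟩
  have : (fun N : ℕ => ∑ n ∈ Icc 1 N, (1:ℂ) * z ^ n / ((n:ℂ) - 1/2) ^ p) = tFin p z := by
    funext N
    unfold tFin
    exact Finset.sum_congr rfl (fun n _ => by rw [one_mul])
  rwa [this] at hL

lemma norm_one_of_root (z : ℂ) (h : ∃ m : ℕ, 0 < m ∧ z ^ m = 1) : ‖z‖ = 1 := by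
  obtain ⟨m, hm, hzm⟩ := h
  have h1 : ‖z‖ ^ m = 1 := by rw [← norm_pow, hzm, norm_one]
  have h0 : 0 ≤ ‖z‖ := norm_nonneg z
  rcases lt_trichotomy ‖z‖ 1 with h | h | h
  · exfalso
    have : ‖z‖ ^ m < 1 := pow_lt_one₀ h0 h (by omega)
    linarith
  · exact h
  · exfalso
    have : 1 < ‖z‖ ^ m := one_lt_pow₀ h (by omega)
    linarith

lemma shift_bounds (z : ℂ) (hz : ‖z‖ = 1) (p : ℕ) (hp : 1 ≤ p) :
    (∀ n, 1 ≤ n → ‖tFin p z (n-1)‖ ≤ 2^(p+1) * Real.sqrt n) ∧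
    (∀ n, 2 ≤ n → ‖tFin p z ((n+1)-1) - tFin p z (n-1)‖ ≤ 2^p / Real.sqrt n) := by
  constructor
  · intro n hn
    calc ‖tFin p z (n-1)‖ ≤ 2^(p+1) * Real.sqrt (n-1 : ℕ) := tFin_norm_le z hz hp (n-1)
    _ ≤ 2^(p+1) * Real.sqrt n := by
        apply mul_le_mul_of_nonneg_left _ (by positivity)
        apply Real.sqrt_le_sqrt
        exact_mod_cast Nat.sub_le n 1
  · intro n hn
    obtain ⟨m, rfl⟩ : ∃ m, n = m + 1 := ⟨n-1, by omega⟩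
    simp only [Nat.add_sub_cancel]
    rw [tFin_succ, add_sub_cancel_left]
    have hcast : ((m:ℂ)+1) - 1/2 = (((m+1:ℕ):ℂ)) - 1/2 := by push_cast; ring
    rw [hcast, norm_div, norm_pow, hz, one_pow, norm_wc p (m+1) (by omega)]
    exact inv_rpow_le (p := p) (k := m+1) hp (by omega)

theorem stmt9 (x x1 x2 : ℂ)
    (hx : ∃ m : ℕ, 0 < m ∧ x ^ m = 1) (hx1 : ∃ m : ℕ, 0 < m ∧ x1 ^ m = 1)
    (hx2 : ∃ m : ℕ, 0 < m ∧ x2 ^ m = 1)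
    (p1 p2 q : ℕ) (hp1 : 1 ≤ p1) (hp2 : 1 ≤ p2) (hq : 1 ≤ q)
    (h1 : ¬(p1 = 1 ∧ x1 = 1)) (h2 : ¬(q = 1 ∧ x = 1)) :
    T2sum p1 p2 q x1 x2 x
      = -ti3 p2 q p1 x2 x x1 - ti2 (p2 + q) p1 (x2 * x) x1
        + tpoly p1 x1 * (ti2 p2 q x2 x + tpoly (p2 + q) (x2 * x)) := by
  have hxn : ‖x‖ = 1 := norm_one_of_root x hx
  have hx1n : ‖x1‖ = 1 := norm_one_of_root x1 hx1
  have hx2n : ‖x2‖ = 1 := norm_one_of_root x2 hx2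
  have hx2xn : ‖x2 * x‖ = 1 := by rw [norm_mul, hx2n, hxn, one_mul]
  have hcase1 : x1 ≠ 1 ∨ 2 ≤ p1 := by
    by_cases h : x1 = 1
    · right
      rcases Nat.lt_or_ge p1 2 with h' | h'
      · exact absurd ⟨by omega, h⟩ h1
      · exact h'
    · exact Or.inl h
  have hcaseq : x ≠ 1 ∨ 2 ≤ q := by
    by_cases h : x = 1
    · right
      rcases Nat.lt_or_ge q 2 with h' | h'
      · exact absurd ⟨by omega, h⟩ h2
      · exact h'
    · exact Or.inl h
  have hpq : 1 ≤ p2 + q := by omega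
  obtain ⟨L1, hL1⟩ := tFin_tendsto x1 hx1n p1 hp1 hcase1
  obtain ⟨L2t, hL2⟩ := tFin_tendsto (x2*x) hx2xn (p2+q) hpq (Or.inr (by omega))
  obtain ⟨hu3, hΔ3⟩ := shift_bounds x2 hx2n p2 hp2
  obtain ⟨L3, hL3⟩ := main_conv x hxn q hq hcaseq (fun n => tFin p2 x2 (n-1))
      (2^(p2+1)) (2^p2) (by positivity) hu3 hΔ3
  -- PP
  set PP : ℕ → ℂ := fun N => ∑ n ∈ Icc 1 N, tFin p2 x2 (n-1) * x ^ n / ((n:ℂ) - 1/2) ^ q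
    with hPPdef
  have hL3' : Tendsto PP atTop (𝓝 L3) := hL3
  obtain ⟨M4, hM4⟩ := (hL3'.norm).bddAbove_range
  have hM4' : ∀ N, ‖PP N‖ ≤ M4 := fun N => hM4 ⟨N, rfl⟩
  have hM4nn : 0 ≤ M4 := le_trans (norm_nonneg (PP 0)) (hM4' 0)
  have hu4 : ∀ k, 1 ≤ k → ‖PP (k-1)‖ ≤ M4 * Real.sqrt k := by
    intro k hk
    have h1 : (1:ℝ) ≤ Real.sqrt k := Real.one_le_sqrt.2 (by exact_mod_cast hk)
    calc ‖PP (k-1)‖ ≤ M4 := hM4' (k-1)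
    _ = M4 * 1 := by ring
    _ ≤ M4 * Real.sqrt k := by nlinarith
  have hΔ4 : ∀ k, 2 ≤ k → ‖PP ((k+1)-1) - PP (k-1)‖ ≤ 2^(p2+2) / Real.sqrt k := by
    intro k hk
    obtain ⟨m, rfl⟩ : ∃ m, k = m + 1 := ⟨k-1, by omega⟩
    simp only [Nat.add_sub_cancel]
    have hstep : PP (m+1) = PP m + tFin p2 x2 ((m+1)-1) * x ^ (m+1) / (((m+1:ℕ):ℂ) - 1/2) ^ q := by
      rw [hPPdef]
      simp only []
      rw [Finset.sum_Icc_succ_top (by omega)]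
    rw [hstep, add_sub_cancel_left]
    have hkk : (0:ℝ) < ((m+1:ℕ):ℝ) := by positivity
    have hsq : (0:ℝ) < Real.sqrt ((m+1:ℕ)) := Real.sqrt_pos.2 hkk
    have hss : Real.sqrt ((m+1:ℕ)) * Real.sqrt ((m+1:ℕ)) = ((m+1:ℕ):ℝ) :=
      Real.mul_self_sqrt (le_of_lt hkk)
    rw [norm_div, norm_mul, norm_pow, hxn, one_pow, mul_one, norm_wc q (m+1) (by omega)]
    have hb1 : ‖tFin p2 x2 ((m+1)-1)‖ ≤ 2^(p2+1) * Real.sqrt ((m+1:ℕ)) := hu3 (m+1) (by omega)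
    have hb2 : 1/(((m+1:ℕ):ℝ)-1/2)^q ≤ 2/((m+1:ℕ):ℝ) := inv_pow_le_two_div hq (by omega)
    have hwpos : (0:ℝ) < (((m+1:ℕ):ℝ)-1/2)^q := pow_pos (rpos (by omega)) q
    rw [div_le_div_iff₀ hwpos hsq]
    have key2 : ((m+1:ℕ):ℝ) ≤ 2 * (((m+1:ℕ):ℝ)-1/2)^q := by
      rw [div_le_div_iff₀ hwpos hkk] at hb2
      nlinarith
    calc ‖tFin p2 x2 ((m+1)-1)‖ * Real.sqrt ((m+1:ℕ))
        ≤ (2^(p2+1) * Real.sqrt ((m+1:ℕ))) * Real.sqrt ((m+1:ℕ)) := by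
          apply mul_le_mul_of_nonneg_right hb1 (le_of_lt hsq)
    _ = 2^(p2+1) * ((m+1:ℕ):ℝ) := by rw [mul_assoc, hss]
    _ ≤ 2^(p2+1) * (2 * (((m+1:ℕ):ℝ)-1/2)^q) := by
          apply mul_le_mul_of_nonneg_left key2 (by positivity)
    _ = 2^(p2+2) * (((m+1:ℕ):ℝ)-1/2)^q := by ring
  obtain ⟨L4, hL4⟩ := main_conv x1 hx1n p1 hp1 hcase1 (fun k => PP (k-1))
      M4 (2^(p2+2)) hM4nn hu4 hΔ4
  obtain ⟨hu5, hΔ5⟩ := shift_bounds (x2*x) hx2xn (p2+q) hpq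
  obtain ⟨L5, hL5⟩ := main_conv x1 hx1n p1 hp1 hcase1 (fun k => tFin (p2+q) (x2*x) (k-1))
      (2^(p2+q+1)) (2^(p2+q)) (by positivity) hu5 hΔ5
  -- splitting of the diagonal term
  have hc : ∀ n : ℕ, 1 ≤ n → tFin p2 x2 n * x ^ n / ((n:ℂ) - 1/2) ^ q
      = tFin p2 x2 (n-1) * x ^ n / ((n:ℂ) - 1/2) ^ q
        + (x2*x) ^ n / ((n:ℂ) - 1/2) ^ (p2+q) := by
    intro n hn
    obtain ⟨m, rfl⟩ : ∃ m, n = m + 1 := ⟨n-1, by omega⟩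
    simp only [Nat.add_sub_cancel]
    rw [tFin_succ]
    have hcast : ((m:ℂ)+1) = (((m+1:ℕ):ℂ)) := by push_cast; ring
    rw [hcast, pow_add]
    ring
  have hCsum : ∀ m : ℕ, ∑ n ∈ Icc 1 m, tFin p2 x2 n * x ^ n / ((n:ℂ) - 1/2) ^ q
      = PP m + tFin (p2+q) (x2*x) m := by
    intro m
    have h2' : tFin (p2+q) (x2*x) m = ∑ n ∈ Icc 1 m, (x2*x) ^ n / ((n:ℂ) - 1/2) ^ (p2+q) := rfl
    rw [hPPdef, h2', ← Finset.sum_add_distrib]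
    exact Finset.sum_congr rfl (fun n hn => hc n (Finset.mem_Icc.1 hn).1)
  have key : ∀ N : ℕ, ∑ n ∈ Icc 1 N, tFin p1 x1 n * tFin p2 x2 n * x ^ n / ((n:ℂ) - 1/2) ^ q
      = tFin p1 x1 N * (PP N + tFin (p2+q) (x2*x) N)
        - ((∑ k ∈ Icc 1 N, PP (k-1) * x1 ^ k / ((k:ℂ) - 1/2) ^ p1)
          + ∑ k ∈ Icc 1 N, tFin (p2+q) (x2*x) (k-1) * x1 ^ k / ((k:ℂ) - 1/2) ^ p1) := by
    intro N
    have e0 : ∑ n ∈ Icc 1 N, tFin p1 x1 n * tFin p2 x2 n * x ^ n / ((n:ℂ) - 1/2) ^ q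
        = ∑ n ∈ Icc 1 N, (∑ k ∈ Icc 1 n, x1 ^ k / ((k:ℂ) - 1/2) ^ p1)
            * (tFin p2 x2 n * x ^ n / ((n:ℂ) - 1/2) ^ q) := by
      apply Finset.sum_congr rfl
      intro n _
      show tFin p1 x1 n * tFin p2 x2 n * x ^ n / ((n:ℂ) - 1/2) ^ q
          = tFin p1 x1 n * (tFin p2 x2 n * x ^ n / ((n:ℂ) - 1/2) ^ q)
      ring
    rw [e0, finite_abel (fun k => x1 ^ k / ((k:ℂ) - 1/2) ^ p1)
        (fun n => tFin p2 x2 n * x ^ n / ((n:ℂ) - 1/2) ^ q) N]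
    rw [hCsum N]
    have e2 : ∑ k ∈ Icc 1 N, (∑ n ∈ Icc 1 (k-1), tFin p2 x2 n * x ^ n / ((n:ℂ) - 1/2) ^ q)
          * (x1 ^ k / ((k:ℂ) - 1/2) ^ p1)
        = ∑ k ∈ Icc 1 N, (PP (k-1) * x1 ^ k / ((k:ℂ) - 1/2) ^ p1
            + tFin (p2+q) (x2*x) (k-1) * x1 ^ k / ((k:ℂ) - 1/2) ^ p1) := by
      apply Finset.sum_congr rfl
      intro k _
      rw [hCsum (k-1)]
      ring
    rw [e2, Finset.sum_add_distrib]
    rfl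
  -- main limit
  have hA : Tendsto (fun N => ∑ n ∈ Icc 1 N,
        tFin p1 x1 n * tFin p2 x2 n * x ^ n / ((n:ℂ) - 1/2) ^ q)
      atTop (𝓝 (L1 * (L3 + L2t) - (L4 + L5))) := by
    have hfun : (fun N => ∑ n ∈ Icc 1 N,
          tFin p1 x1 n * tFin p2 x2 n * x ^ n / ((n:ℂ) - 1/2) ^ q)
        = (fun N => tFin p1 x1 N * (PP N + tFin (p2+q) (x2*x) N)
            - ((∑ k ∈ Icc 1 N, PP (k-1) * x1 ^ k / ((k:ℂ) - 1/2) ^ p1)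
              + ∑ k ∈ Icc 1 N, tFin (p2+q) (x2*x) (k-1) * x1 ^ k / ((k:ℂ) - 1/2) ^ p1)) :=
      funext key
    rw [hfun]
    exact (hL1.mul (hL3'.add hL2)).sub (hL4.add hL5)
  -- identify the constants
  have eT : T2sum p1 p2 q x1 x2 x = L1 * (L3 + L2t) - (L4 + L5) := lim_eq hA
  have e1 : tpoly p1 x1 = L1 := lim_eq hL1
  have e2' : tpoly (p2+q) (x2*x) = L2t := lim_eq hL2
  have e3 : ti2 p2 q x2 x = L3 := by
    have hfun3 : (fun N : ℕ => ∑ n2 ∈ Icc 1 N, ∑ n1 ∈ Icc 1 (n2-1),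
          x2 ^ n1 * x ^ n2 / (((n1:ℂ) - 1/2) ^ p2 * ((n2:ℂ) - 1/2) ^ q)) = PP := by
      funext N
      rw [hPPdef]
      apply Finset.sum_congr rfl
      intro n _
      rw [show tFin p2 x2 (n-1) = ∑ k ∈ Icc 1 (n-1), x2 ^ k / ((k:ℂ) - 1/2) ^ p2 from rfl,
        Finset.sum_mul, Finset.sum_div]
      exact Finset.sum_congr rfl (fun m _ => by ring)
    have := hL3'
    rw [← hfun3] at this
    exact lim_eq this
  have e5 : ti2 (p2+q) p1 (x2*x) x1 = L5 := by
    have hfun5 : (fun N : ℕ => ∑ n2 ∈ Icc 1 N, ∑ n1 ∈ Icc 1 (n2-1),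
          (x2*x) ^ n1 * x1 ^ n2 / (((n1:ℂ) - 1/2) ^ (p2+q) * ((n2:ℂ) - 1/2) ^ p1))
        = (fun N => ∑ k ∈ Icc 1 N, tFin (p2+q) (x2*x) (k-1) * x1 ^ k / ((k:ℂ) - 1/2) ^ p1) := by
      funext N
      apply Finset.sum_congr rfl
      intro n _
      rw [show tFin (p2+q) (x2*x) (n-1)
          = ∑ k ∈ Icc 1 (n-1), (x2*x) ^ k / ((k:ℂ) - 1/2) ^ (p2+q) from rfl,
        Finset.sum_mul, Finset.sum_div]
      exact Finset.sum_congr rfl (fun m _ => by ring)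
    have := hL5
    rw [← hfun5] at this
    exact lim_eq this
  have e4 : ti3 p2 q p1 x2 x x1 = L4 := by
    have hfun4 : (fun N : ℕ => ∑ n3 ∈ Icc 1 N, ∑ n2 ∈ Icc 1 (n3-1), ∑ n1 ∈ Icc 1 (n2-1),
          x2 ^ n1 * x ^ n2 * x1 ^ n3 /
            (((n1:ℂ) - 1/2) ^ p2 * ((n2:ℂ) - 1/2) ^ q * ((n3:ℂ) - 1/2) ^ p1))
        = (fun N => ∑ k ∈ Icc 1 N, PP (k-1) * x1 ^ k / ((k:ℂ) - 1/2) ^ p1) := by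
      funext N
      apply Finset.sum_congr rfl
      intro k _
      rw [hPPdef]
      simp only []
      rw [Finset.sum_mul, Finset.sum_div]
      apply Finset.sum_congr rfl
      intro n _
      rw [show tFin p2 x2 (n-1) = ∑ j ∈ Icc 1 (n-1), x2 ^ j / ((j:ℂ) - 1/2) ^ p2 from rfl,
        Finset.sum_mul, Finset.sum_div, Finset.sum_mul, Finset.sum_div]
      exact Finset.sum_congr rfl (fun m _ => by ring)
    have := hL4
    rw [← hfun4] at this
    exact lim_eq this
  rw [eT, e1, e2', e3, e4, e5]
  ring
end

section
/- ∑_{0<n_1<n_2<n_3} 1/((n_1−1/2)^2·(n_2−1/2)^2·(n_3−1/2)^2) = (1/48)·∑_{n=1}^∞ 1/(n−1/2)^6; that is, t(2,2,2) = (1/48)·t(6). -/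
/-!
With `g n = (n + 1/2)⁻²`, `t(2,2,2)` is the third elementary symmetric function `e₃` of the
values of `g`, and `t(2k) = ∑ g n ^ k` are its power sums `p_k`. Newton's identity
`6 e₃ = p₁³ - 3 p₁ p₂ + 2 p₃`, proved for partial sums and passed to the limit, together with
`t(2k) = (2^(2k) - 1) ζ(2k)` and `ζ(2) = π²/6`, `ζ(4) = π⁴/90`, `ζ(6) = π⁶/945`, gives
`t(2,2,2) = π⁶/720 = t(6)/48`.
-/

open Finset Real

theorem bernoulli'_five : bernoulli' 5 = 0 := by
  have : Nat.choose 5 2 = 10 := by decide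
  rw [bernoulli'_def]
  norm_num [sum_range_succ, this]

theorem bernoulli'_six : bernoulli' 6 = 1 / 42 := by
  have h₂ : Nat.choose 6 2 = 15 := by decide
  have h₃ : Nat.choose 6 3 = 20 := by decide
  have h₄ : Nat.choose 6 4 = 15 := by decide
  rw [bernoulli'_def]
  norm_num [sum_range_succ, h₂, h₃, h₄, bernoulli'_five]

theorem hasSum_zeta_six : HasSum (fun n : ℕ => (1 : ℝ) / (n : ℝ) ^ 6) (π ^ 6 / 945) := by
  convert hasSum_zeta_nat three_ne_zero using 1
  rw [bernoulli_eq_bernoulli'_of_ne_one (by decide), bernoulli'_six]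
  simp [Nat.factorial]; ring

theorem hasSum_one_div_add_half_pow {s : ℕ} {z : ℝ}
    (hz : HasSum (fun n : ℕ => 1 / (n : ℝ) ^ s) z) :
    HasSum (fun n : ℕ => 1 / ((n : ℝ) + 1 / 2) ^ s) ((2 ^ s - 1) * z) := by
  have heven : HasSum (fun k : ℕ => 1 / ((2 * k : ℕ) : ℝ) ^ s) (z / 2 ^ s) := by
    have hdouble (k : ℕ) : 1 / ((2 * k : ℕ) : ℝ) ^ s = 1 / (k : ℝ) ^ s / 2 ^ s := by
      push_cast; rw [mul_pow, div_div, mul_comm]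
    rw [funext hdouble]
    exact hz.div_const _
  have hodd : Summable fun k : ℕ => 1 / ((2 * k + 1 : ℕ) : ℝ) ^ s :=
    hz.summable.comp_injective fun a b h => by omega
  have hsplit : z / 2 ^ s + ∑' k : ℕ, 1 / ((2 * k + 1 : ℕ) : ℝ) ^ s = z :=
    (hz.unique (heven.even_add_odd hodd.hasSum)).symm
  have hhalf (n : ℕ) :
      1 / ((n : ℝ) + 1 / 2) ^ s = 2 ^ s * (1 / ((2 * n + 1 : ℕ) : ℝ) ^ s) := by
    rw [show (n : ℝ) + 1 / 2 = ((2 * n + 1 : ℕ) : ℝ) / 2 by push_cast; ring, div_pow,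
      one_div_div, mul_one_div]
  have hvalue : (2 ^ s - 1) * z = 2 ^ s * ∑' k : ℕ, 1 / ((2 * k + 1 : ℕ) : ℝ) ^ s := by
    rw [eq_sub_of_add_eq' hsplit]; field_simp
  rw [funext hhalf, hvalue]
  exact hodd.hasSum.mul_left _

theorem hasSum_one_div_add_half_sq :
    HasSum (fun n : ℕ => 1 / ((n : ℝ) + 1 / 2) ^ 2) (π ^ 2 / 2) := by
  convert hasSum_one_div_add_half_pow hasSum_zeta_two using 1; ring

theorem hasSum_one_div_add_half_pow_four :
    HasSum (fun n : ℕ => 1 / ((n : ℝ) + 1 / 2) ^ 4) (π ^ 4 / 6) := by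
  convert hasSum_one_div_add_half_pow hasSum_zeta_four using 1; ring

theorem hasSum_one_div_add_half_pow_six :
    HasSum (fun n : ℕ => 1 / ((n : ℝ) + 1 / 2) ^ 6) (π ^ 6 / 15) := by
  convert hasSum_one_div_add_half_pow hasSum_zeta_six using 1; ring

section Newton

variable {R : Type*} [CommSemiring R] (g : ℕ → R) (N : ℕ)

theorem sq_sum_range_newton :
    (∑ n ∈ range N, g n) ^ 2
      = 2 * ∑ b ∈ range N, g b * ∑ a ∈ range b, g a + ∑ n ∈ range N, g n ^ 2 := by
  induction N with
  | zero => simp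
  | succ N ih => rw [sum_range_succ, add_sq, ih, sum_range_succ, sum_range_succ]; ring

theorem cube_sum_range_newton :
    (∑ n ∈ range N, g n) ^ 3 + 2 * ∑ n ∈ range N, g n ^ 3
      = 6 * ∑ c ∈ range N, g c * ∑ b ∈ range c, g b * ∑ a ∈ range b, g a
        + 3 * (∑ n ∈ range N, g n) * ∑ n ∈ range N, g n ^ 2 := by
  induction N with
  | zero => simp
  | succ N ih =>
    simp only [sum_range_succ]
    set p₁ := ∑ n ∈ range N, g n
    calc (p₁ + g N) ^ 3 + 2 * (∑ n ∈ range N, g n ^ 3 + g N ^ 3)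
        = (p₁ ^ 3 + 2 * ∑ n ∈ range N, g n ^ 3) + 3 * g N * p₁ ^ 2 + 3 * p₁ * g N ^ 2
          + 3 * g N ^ 3 := by ring
      _ = _ := by rw [ih, sq_sum_range_newton]; ring

end Newton

section Nonneg

variable {g : ℕ → ℝ} (hg : ∀ n, 0 ≤ g n) {s₁ s₂ s₃ : ℝ} (h₁ : HasSum g s₁)
  (h₂ : HasSum (fun n => g n ^ 2) s₂) (h₃ : HasSum (fun n => g n ^ 3) s₃)
include hg h₁ h₂ h₃

theorem hasSum_mul_sum_range_mul_sum_range_of_nonneg :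
    HasSum (fun c => g c * ∑ b ∈ range c, g b * ∑ a ∈ range b, g a)
      ((s₁ ^ 3 - 3 * s₁ * s₂ + 2 * s₃) / 6) := by
  rw [hasSum_iff_tendsto_nat_of_nonneg fun c =>
    mul_nonneg (hg c) (sum_nonneg fun b _ => mul_nonneg (hg b) (sum_nonneg fun a _ => hg a))]
  have hpartial (N : ℕ) : ∑ c ∈ range N, g c * ∑ b ∈ range c, g b * ∑ a ∈ range b, g a
      = ((∑ n ∈ range N, g n) ^ 3 - 3 * (∑ n ∈ range N, g n) * ∑ n ∈ range N, g n ^ 2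
          + 2 * ∑ n ∈ range N, g n ^ 3) / 6 := by
    linear_combination (-1 / 6 : ℝ) * cube_sum_range_newton g N
  simp only [hpartial]
  have hp₁ := h₁.tendsto_sum_nat
  exact (((hp₁.pow 3).sub ((hp₁.const_mul 3).mul h₂.tendsto_sum_nat)).add
    (h₃.tendsto_sum_nat.const_mul 2)).div_const 6

theorem hasSum_sigma_fin_fin_of_nonneg :
    HasSum (fun x : Σ c : ℕ, Σ b : Fin c, Fin b => g x.1 * (g x.2.1 * g x.2.2))
      ((s₁ ^ 3 - 3 * s₁ * s₂ + 2 * s₃) / 6) := by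
  set f := fun x : Σ c : ℕ, Σ b : Fin c, Fin b => g x.1 * (g x.2.1 * g x.2.2)
  have hrow := hasSum_mul_sum_range_mul_sum_range_of_nonneg hg h₁ h₂ h₃
  have hfiber (c : ℕ) :
      HasSum (fun y => f ⟨c, y⟩) (g c * ∑ b ∈ range c, g b * ∑ a ∈ range b, g a) := by
    convert hasSum_fintype (fun y => f ⟨c, y⟩) using 1
    simp only [f, Fintype.sum_sigma, ← mul_sum, Fin.sum_univ_eq_sum_range (fun a => g a)]
    rw [Fin.sum_univ_eq_sum_range (fun b => g b * ∑ a ∈ range b, g a)]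
  have hf : Summable f := by
    refine (summable_sigma_of_nonneg fun x => mul_nonneg (hg _) (mul_nonneg (hg _) (hg _))).2
      ⟨fun c => (hfiber c).summable, ?_⟩
    exact (funext fun c => (hfiber c).tsum_eq) ▸ hrow.summable
  rw [hrow.unique (hf.hasSum.sigma hfiber)]
  exact hf.hasSum

end Nonneg

def posStrictTriplesEquivSigmaFin :
    {p : ℕ × ℕ × ℕ // 0 < p.1 ∧ p.1 < p.2.1 ∧ p.2.1 < p.2.2} ≃ Σ c : ℕ, Σ b : Fin c, Fin b where
  toFun p := ⟨p.1.2.2 - 1, ⟨p.1.2.1 - 1, by omega⟩, ⟨p.1.1 - 1, by simp only; omega⟩⟩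
  invFun x := ⟨(x.2.2 + 1, x.2.1 + 1, x.1 + 1), by simp only; omega⟩
  left_inv p := by
    obtain ⟨⟨a, b, c⟩, h⟩ := p
    simp only at h
    ext <;> simp only <;> omega
  right_inv _ := rfl

theorem stmt11 :
    (∑' x : {p : ℕ × ℕ × ℕ // 0 < p.1 ∧ p.1 < p.2.1 ∧ p.2.1 < p.2.2},
        (1 : ℝ) / (((x.1.1 : ℝ) - 1/2) ^ 2 * ((x.1.2.1 : ℝ) - 1/2) ^ 2
          * ((x.1.2.2 : ℝ) - 1/2) ^ 2))
      = (1/48) * ∑' m : ℕ, (1 : ℝ) / ((m : ℝ) + 1/2) ^ 6 := by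
  set g : ℕ → ℝ := fun n => 1 / ((n : ℝ) + 1 / 2) ^ 2
  have hpow (k n : ℕ) : g n ^ k = 1 / ((n : ℝ) + 1 / 2) ^ (2 * k) := by
    rw [one_div_pow, ← pow_mul]
  have h₂ : HasSum (fun n => g n ^ 2) (π ^ 4 / 6) := by
    simpa only [hpow] using hasSum_one_div_add_half_pow_four
  have h₃ : HasSum (fun n => g n ^ 3) (π ^ 6 / 15) := by
    simpa only [hpow] using hasSum_one_div_add_half_pow_six
  have hshift (n : ℕ) : ((n + 1 : ℕ) : ℝ) - 1 / 2 = n + 1 / 2 := by push_cast; ring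
  have hterm (x : Σ c : ℕ, Σ b : Fin c, Fin b) :
      g x.1 * (g x.2.1 * g x.2.2) = 1 / ((((x.2.2 + 1 : ℕ) : ℝ) - 1 / 2) ^ 2
        * (((x.2.1 + 1 : ℕ) : ℝ) - 1 / 2) ^ 2 * (((x.1 + 1 : ℕ) : ℝ) - 1 / 2) ^ 2) := by
    simp only [g, hshift, one_div_mul_one_div]; congr 1; ring
  have hsigma := hasSum_sigma_fin_fin_of_nonneg (g := g) (fun n => by positivity)
    hasSum_one_div_add_half_sq h₂ h₃
  simp only [hterm] at hsigma
  rw [← posStrictTriplesEquivSigmaFin.symm.tsum_eq, hasSum_one_div_add_half_pow_six.tsum_eq]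
  refine hsigma.tsum_eq.trans ?_
  ring
end
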